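/- For all integers m ≥ 1 and n ≥ 1, det D″_{m,n} = ∏_{h=1}^{m} ∏_{k=1}^{n} (4·cos²((2h−1)π/(4m)) + 4·cos²((2k−1)π/(4n))). -/

import Mathlib

open Real

/-- The `n × n` matrix `A′_n`: all diagonal entries `4`, entry `-1` at every position
`(h,k)` with `|h-k| = 1` except at position `(n, n-1)` (the last row, next-to-last
column), where the entry is `-2`, and `0` elsewhere. -/
def matA' (n : ℕ) : Matrix (Fin n) (Fin n) ℝ :=
  Matrix.of fun h k =>
    if h = k then 4
    else if (h : ℕ) = n - 1 ∧ (k : ℕ) + 2 = n then -2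
    else if |(h : ℤ) - (k : ℤ)| = 1 then -1 else 0

/-- The `mn × mn` block-tridiagonal matrix `D″_{m,n}`: every diagonal block is `A′_n`;
the blocks immediately above the diagonal are `-I_n`; the blocks immediately below the
diagonal are `-I_n` except the one in the last block-row, which is `-2·I_n`; all other
blocks are zero.  (For `m = 1` this is just `A′_n`.) -/
def matD'' (m n : ℕ) : Matrix (Fin m × Fin n) (Fin m × Fin n) ℝ :=
  Matrix.of fun p q =>
    if p.1 = q.1 then matA' n p.2 q.2
    else if (p.1 : ℕ) = (q.1 : ℕ) + 1 then
      (if (p.1 : ℕ) = m - 1 then (-2 : ℝ) • (1 : Matrix (Fin n) (Fin n) ℝ)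
       else -(1 : Matrix (Fin n) (Fin n) ℝ)) p.2 q.2
    else if (q.1 : ℕ) = (p.1 : ℕ) + 1 then
      (-(1 : Matrix (Fin n) (Fin n) ℝ)) p.2 q.2
    else 0

/-!
Write `L_m` for the second difference on `0, …, m - 1` with a Dirichlet condition at `-1` and a
reflecting condition at `m`; then `A′_n = 2 + L_n` and `D″_{m,n} = L_m ⊗ 1 + 1 ⊗ L_n`.
For `θ = (2i + 1)π/(2m)` we have `cos (mθ) = 0`, so the sine vector `(sin ((j + 1)θ))_j` satisfies
both boundary conditions and is an eigenvector of `L_m` with eigenvalue `2 - 2 cos θ`. These `m`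
eigenvalues are distinct, so the sine vectors form an invertible matrix `P_m`, and `P_m ⊗ P_n`
diagonalizes `D″_{m,n}`. Reindexing `h = m - i`, `2 - 2 cos θ = 4 cos² ((2h - 1)π/(4m))`.
-/

open Matrix Kronecker Finset

section Diagonalization

variable {R ι κ : Type*} [CommRing R] [Fintype ι] [DecidableEq ι] [Fintype κ] [DecidableEq κ]

theorem Matrix.det_eq_prod_of_mul_eq_mul_diagonal {M P : Matrix ι ι R} {d : ι → R}
    (hP : IsUnit P.det) (h : M * P = P * diagonal d) : M.det = ∏ i, d i := by
  have := congrArg det h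
  rw [det_mul, det_mul, det_diagonal, mul_comm P.det] at this
  exact hP.mul_left_injective this

theorem Matrix.det_kronecker_one_add_one_kronecker {A P : Matrix ι ι R} {B Q : Matrix κ κ R}
    {a : ι → R} {b : κ → R} (hP : IsUnit P.det) (hQ : IsUnit Q.det)
    (hA : A * P = P * diagonal a) (hB : B * Q = Q * diagonal b) :
    (A ⊗ₖ (1 : Matrix κ κ R) + (1 : Matrix ι ι R) ⊗ₖ B).det = ∏ i, ∏ j, (a i + b j) := by
  rw [← Fintype.prod_prod_type']
  refine det_eq_prod_of_mul_eq_mul_diagonal (P := P ⊗ₖ Q) ?_ ?_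
  · rw [det_kronecker]
    exact (hP.pow _).mul (hQ.pow _)
  · calc (A ⊗ₖ 1 + 1 ⊗ₖ B) * (P ⊗ₖ Q) = (A * P) ⊗ₖ (1 * Q) + (1 * P) ⊗ₖ (B * Q) := by
          rw [add_mul, mul_kronecker_mul, mul_kronecker_mul]
      _ = (P * diagonal a) ⊗ₖ (Q * 1) + (P * 1) ⊗ₖ (Q * diagonal b) := by
          rw [hA, hB, one_mul, one_mul, mul_one, mul_one]
      _ = (P ⊗ₖ Q) * diagonal fun p : ι × κ => a p.1 + b p.2 := by
          rw [mul_kronecker_mul, mul_kronecker_mul, ← mul_add, ← diagonal_one, ← diagonal_one,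
            diagonal_kronecker_diagonal, diagonal_kronecker_diagonal, diagonal_add]
          simp only [mul_one, one_mul]

end Diagonalization

theorem Finset.sum_range_ite_add_eq {M : Type*} [AddCommMonoid M] (f : ℕ → M) (c k m : ℕ) :
    ∑ l ∈ range m, (if l + c = k then f l else 0) = if c ≤ k ∧ k - c < m then f (k - c) else 0 := by
  calc ∑ l ∈ range m, (if l + c = k then f l else 0)
      = ∑ l ∈ range m, if l = k - c then (if c ≤ k then f l else 0) else 0 :=
        sum_congr rfl fun l _ => by split_ifs <;> first | rfl | omega
    _ = _ := by rw [sum_ite_eq']; simp only [mem_range]; split_ifs <;> first | rfl | omega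

-- Row `m - 1` meets column `m - 2` twice: the reflection `x_m = x_{m-2}` folds it back.
def pathLap (m : ℕ) : Matrix (Fin m) (Fin m) ℝ :=
  Matrix.of fun j l =>
    (if (l : ℕ) = j then 2 else 0) - (if (l : ℕ) = j + 1 then 1 else 0)
      - (if (l : ℕ) + 1 = j then 1 else 0) - (if (l : ℕ) + 2 = m ∧ (j : ℕ) + 1 = m then 1 else 0)

theorem pathLap_mulVec_apply {m : ℕ} (s : ℕ → ℝ) (h0 : s 0 = 0) (hreflect : s (m + 1) = s (m - 1))
    (j : Fin m) : (pathLap m *ᵥ fun l => s (l + 1)) j = 2 * s (j + 1) - s j - s (j + 2) := by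
  have hj := j.isLt
  simp only [mulVec, dotProduct, pathLap, of_apply, sub_mul, ite_mul, zero_mul, one_mul, ite_and]
  rw [Fin.sum_univ_eq_sum_range (fun l => (if l = (j : ℕ) then 2 * s (l + 1) else 0) -
      (if l = j + 1 then s (l + 1) else 0) - (if l + 1 = j then s (l + 1) else 0) -
      (if l + 2 = m then (if (j : ℕ) + 1 = m then s (l + 1) else 0) else 0)) m]
  simp only [sum_sub_distrib]
  rw [sum_ite_eq', sum_ite_eq', sum_range_ite_add_eq, sum_range_ite_add_eq]
  generalize (j : ℕ) = k at hj ⊢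
  simp only [mem_range, if_pos hj]
  rcases Nat.lt_or_ge (k + 1) m with hlt | hge
  · rw [if_pos hlt, if_neg hlt.ne, ite_self]
    rcases Nat.eq_zero_or_pos k with rfl | hk
    · rw [if_neg (by omega), h0]; ring
    · rw [if_pos ⟨hk, by omega⟩, Nat.sub_add_cancel hk]; ring
  · obtain rfl : m = k + 1 := by omega
    rw [if_neg (by omega), if_pos rfl]
    rw [Nat.add_sub_cancel] at hreflect
    rcases Nat.eq_zero_or_pos k with rfl | hk
    · rw [if_neg (by omega), if_neg (by omega), show 0 + 2 = 0 + 1 + 1 from rfl, hreflect, h0]; ring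
    · rw [if_pos ⟨hk, by omega⟩, if_pos (by omega), Nat.sub_add_cancel hk,
        show k + 1 - 2 + 1 = k by omega, ← hreflect]; ring

theorem pathLap_mulVec_sin {m : ℕ} {θ : ℝ} (hθ : cos (m * θ) = 0) :
    (pathLap m *ᵥ fun j => sin (((j : ℕ) + 1) * θ)) =
      (2 - 2 * cos θ) • fun j : Fin m => sin (((j : ℕ) + 1) * θ) := by
  have hm : m ≠ 0 := by rintro rfl; simp at hθ
  have h0 : sin ((0 : ℕ) * θ) = 0 := by simp
  -- `sin ((m + 1)θ) - sin ((m - 1)θ) = 2 cos (mθ) sin θ`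
  have hreflect : sin (((m + 1 : ℕ) : ℝ) * θ) = sin (((m - 1 : ℕ) : ℝ) * θ) := by
    rw [Nat.cast_sub (Nat.one_le_iff_ne_zero.mpr hm)]
    push_cast
    rw [add_mul, sub_mul, one_mul, sin_add, sin_sub, hθ, zero_mul, add_zero, sub_zero]
  ext j
  have h := pathLap_mulVec_apply (fun k : ℕ => sin (k * θ)) h0 hreflect j
  push_cast at h
  rw [h, Pi.smul_apply, smul_eq_mul]
  have hx : ((j : ℝ) + 2) * θ = ((j : ℝ) + 1) * θ + θ := by ring
  have hy : (j : ℝ) * θ = ((j : ℝ) + 1) * θ - θ := by ring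
  rw [hx, hy, sin_add, sin_sub]
  ring

noncomputable def pathAngle (m i : ℕ) : ℝ := (2 * i + 1) * π / (2 * m)

theorem cos_mul_pathAngle {m : ℕ} (hm : m ≠ 0) (i : ℕ) : cos (m * pathAngle m i) = 0 := by
  rw [cos_eq_zero_iff]
  exact ⟨i, by unfold pathAngle; push_cast; field_simp⟩

theorem pathAngle_mem_Ioo {m i : ℕ} (hi : i < m) : pathAngle m i ∈ Set.Ioo 0 π := by
  have hm : (0 : ℝ) < m := by exact_mod_cast hi.trans_le' (Nat.zero_le i)
  have hi' : (i : ℝ) + 1 ≤ m := by exact_mod_cast hi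
  unfold pathAngle
  constructor
  · positivity
  · rw [div_lt_iff₀ (by positivity)]
    nlinarith [pi_pos]

theorem strictMono_pathAngle {m : ℕ} (hm : m ≠ 0) : StrictMono (pathAngle m) := by
  intro i j hij
  unfold pathAngle
  have : (i : ℝ) < j := by exact_mod_cast hij
  gcongr

noncomputable def pathEigvecs (m : ℕ) : Matrix (Fin m) (Fin m) ℝ :=
  Matrix.of fun j i => sin (((j : ℕ) + 1) * pathAngle m i)

theorem pathLap_mul_pathEigvecs (m : ℕ) :
    pathLap m * pathEigvecs m =
      pathEigvecs m * diagonal fun i : Fin m => 2 - 2 * cos (pathAngle m i) := by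
  ext j i
  have h := congrFun (pathLap_mulVec_sin (cos_mul_pathAngle i.pos.ne' i)) j
  rw [mul_diagonal, mul_apply]
  simpa only [pathEigvecs, mul_comm, of_apply, mulVec, dotProduct, Pi.smul_apply, smul_eq_mul]
    using h

theorem isUnit_det_pathEigvecs (m : ℕ) : IsUnit (pathEigvecs m).det := by
  rw [← isUnit_iff_isUnit_det, ← linearIndependent_cols_iff_isUnit]
  refine Module.End.eigenvectors_linearIndependent' (mulVecLin (pathLap m))
    (fun i : Fin m => 2 - 2 * cos (pathAngle m i)) ?_ _ fun i => ⟨?_, ?_⟩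
  · intro i k hik
    have hcos : cos (pathAngle m i) = cos (pathAngle m k) := by simpa using hik
    have hangle := injOn_cos (Set.Ioo_subset_Icc_self (pathAngle_mem_Ioo i.isLt))
      (Set.Ioo_subset_Icc_self (pathAngle_mem_Ioo k.isLt)) hcos
    exact Fin.ext ((strictMono_pathAngle i.pos.ne').injective hangle)
  · rw [Module.End.mem_eigenspace_iff, mulVecLin_apply]
    exact pathLap_mulVec_sin (cos_mul_pathAngle i.pos.ne' i)
  · intro h0
    have := congrFun h0 ⟨0, i.pos⟩
    have hpos := sin_pos_of_mem_Ioo (pathAngle_mem_Ioo i.isLt)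
    simp only [pathEigvecs, col_apply, of_apply, CharP.cast_eq_zero, zero_add, one_mul,
      Pi.zero_apply] at this
    linarith

theorem matA'_eq (n : ℕ) : matA' n = 2 + pathLap n := by
  ext b d
  have habs : |(b : ℤ) - d| = 1 ↔ (b : ℕ) = d + 1 ∨ (d : ℕ) = b + 1 := by
    rw [abs_eq zero_le_one]; omega
  have := b.isLt; have := d.isLt
  simp only [matA', pathLap, Matrix.add_apply, of_apply, ofNat_apply, Fin.ext_iff, habs]
  split_ifs <;> first | omega | norm_num

theorem matD''_eq_kronecker (m n : ℕ) :
    matD'' m n =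
      pathLap m ⊗ₖ (1 : Matrix (Fin n) (Fin n) ℝ) + (1 : Matrix (Fin m) (Fin m) ℝ) ⊗ₖ pathLap n := by
  ext ⟨a, b⟩ ⟨c, d⟩
  by_cases hac : a = c
  · subst hac
    have h2 : pathLap m a a = 2 := by
      simp [pathLap, show ¬((a : ℕ) + 2 = m ∧ (a : ℕ) + 1 = m) by omega]
    simp only [matD'', of_apply, if_true, matA'_eq, Matrix.add_apply, kroneckerMap_apply,
      one_mul, h2, ofNat_apply, one_apply]
    split_ifs <;> ring
  · have := a.isLt; have := c.isLt
    simp only [matD'', of_apply, if_neg hac, Matrix.add_apply, kroneckerMap_apply,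
      one_apply_ne hac, zero_mul, add_zero, apply_ite (fun M : Matrix (Fin n) (Fin n) ℝ => M b d),
      Matrix.smul_apply, Matrix.neg_apply, smul_eq_mul, pathLap]
    rw [Fin.ext_iff] at hac
    split_ifs <;> first | omega | ring

theorem Finset.prod_Icc_one_eq_prod_fin_sub {M : Type*} [CommMonoid M] (f : ℕ → M) (m : ℕ) :
    ∏ h ∈ Icc 1 m, f h = ∏ i : Fin m, f (m - i) := by
  rw [Fin.prod_univ_eq_prod_range (fun i => f (m - i)), ← prod_range_reflect]
  refine prod_nbij' (fun h => h - 1) (fun j => j + 1) ?_ ?_ ?_ ?_ ?_ <;>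
    simp only [mem_Icc, mem_range] <;> intros <;> first | omega | congr 1; omega

theorem four_mul_cos_sq_eq_two_sub_two_mul_cos_pathAngle {m i : ℕ} (hi : i < m) :
    4 * cos ((2 * ((m - i : ℕ) : ℝ) - 1) * π / (4 * m)) ^ 2 = 2 - 2 * cos (pathAngle m i) := by
  have hm : (m : ℝ) ≠ 0 := Nat.cast_ne_zero.mpr (by omega)
  have h2x : 2 * ((2 * ((m - i : ℕ) : ℝ) - 1) * π / (4 * m)) = π - pathAngle m i := by
    rw [Nat.cast_sub hi.le, pathAngle]; field_simp; ring
  rw [cos_sq, h2x, cos_pi_sub]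
  ring

theorem det_matD''_eq_double_product_general (m n : ℕ) :
    (matD'' m n).det =
      ∏ h ∈ Finset.Icc 1 m, ∏ k ∈ Finset.Icc 1 n,
        (4 * Real.cos ((2 * h - 1) * π / (4 * m)) ^ 2 +
         4 * Real.cos ((2 * k - 1) * π / (4 * n)) ^ 2) := by
  rw [matD''_eq_kronecker, det_kronecker_one_add_one_kronecker (isUnit_det_pathEigvecs m)
    (isUnit_det_pathEigvecs n) (pathLap_mul_pathEigvecs m) (pathLap_mul_pathEigvecs n),
    prod_Icc_one_eq_prod_fin_sub]
  refine prod_congr rfl fun i _ => ?_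
  rw [prod_Icc_one_eq_prod_fin_sub]
  refine prod_congr rfl fun k _ => ?_
  rw [four_mul_cos_sq_eq_two_sub_two_mul_cos_pathAngle i.isLt,
    four_mul_cos_sq_eq_two_sub_two_mul_cos_pathAngle k.isLt]

theorem det_matD''_eq_double_product (m n : ℕ) (hm : 1 ≤ m) (hn : 1 ≤ n) :
    (matD'' m n).det =
      ∏ h ∈ Finset.Icc 1 m, ∏ k ∈ Finset.Icc 1 n,
        (4 * Real.cos ((2 * h - 1) * π / (4 * m)) ^ 2 +
         4 * Real.cos ((2 * k - 1) * π / (4 * n)) ^ 2) :=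
  det_matD''_eq_double_product_general m n
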